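/- arXiv:0909.0501 — 3 statements merged into one kernel-verified Lean document; each statement's English description precedes it below -/
import Mathlib

section
/- Under assumptions (7)–(10) of the paper, the map u ↦ [F'(u)]⁻¹(F(u) − h) is locally Lipschitz on the ball B_a(U, R) with respect to the H_a norm. -/
/-!
Write `N u = (A u)⁻¹ (F u - h)`. With `q = N v`,
`N u - N v = (A u)⁻¹ (F u - F v) - (A u)⁻¹ (A u - A v) q`.
The first term is bounded by `c₀⁻¹ c₀' ‖u - v‖`, since `‖(A u)⁻¹‖ ≤ c₀⁻¹` and `F` is
`c₀'`-Lipschitz on the convex ball by the mean value inequality; the second by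
`c ‖u - v‖ ‖q‖ ≤ c² ‖u - v‖`, using the stability bound and `‖q‖ ≤ c`.
-/

namespace ContinuousLinearEquiv

variable {𝕜 E F : Type*} [NormedField 𝕜] [SeminormedAddCommGroup E] [NormedSpace 𝕜 E]
  [SeminormedAddCommGroup F] [NormedSpace 𝕜 F]

theorem norm_symm_apply_le_inv_mul {e : E ≃L[𝕜] F} {c₀ : ℝ} (hc₀ : 0 < c₀)
    (he : ∀ v, c₀ * ‖v‖ ≤ ‖e v‖) (w : F) : ‖e.symm w‖ ≤ c₀⁻¹ * ‖w‖ := by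
  rw [le_inv_mul_iff₀ hc₀]
  simpa using he (e.symm w)

theorem symm_apply_sub_symm_apply (e₁ e₂ : E ≃L[𝕜] F) (x y : F) :
    e₁.symm x - e₂.symm y = e₁.symm (x - y) - e₁.symm (e₁ (e₂.symm y) - e₂ (e₂.symm y)) := by
  simp only [map_sub, symm_apply_apply, apply_symm_apply]
  abel

end ContinuousLinearEquiv

open ContinuousLinearEquiv in
theorem lipschitzOnWith_symm_apply_sub
    {𝕜 E F : Type*} [NormedField 𝕜] [SeminormedAddCommGroup E] [NormedSpace 𝕜 E]
    [SeminormedAddCommGroup F] [NormedSpace 𝕜 F]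
    {G : E → F} {A : E → (E ≃L[𝕜] F)} {s : Set E} {h : F} {L M c C : ℝ}
    (hM : 0 ≤ M) (hc : 0 ≤ c)
    (hG : ∀ u ∈ s, ∀ v ∈ s, ‖G u - G v‖ ≤ L * ‖u - v‖)
    (hAinv : ∀ u ∈ s, ∀ w, ‖(A u).symm w‖ ≤ M * ‖w‖)
    (hA : ∀ u ∈ s, ∀ v ∈ s, ∀ q, ‖(A u).symm (A u q - A v q)‖ ≤ c * ‖u - v‖ * ‖q‖)
    (hbound : ∀ v ∈ s, ‖(A v).symm (G v - h)‖ ≤ C) :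
    LipschitzOnWith (M * L + c * C).toNNReal (fun u => (A u).symm (G u - h)) s := by
  rw [lipschitzOnWith_iff_norm_sub_le]
  intro u hu v hv
  set q := (A v).symm (G v - h)
  have hfirst : ‖(A u).symm (G u - G v)‖ ≤ M * L * ‖u - v‖ :=
    calc ‖(A u).symm (G u - G v)‖ ≤ M * ‖G u - G v‖ := hAinv u hu _
      _ ≤ M * (L * ‖u - v‖) := by gcongr; exact hG u hu v hv
      _ = M * L * ‖u - v‖ := by ring
  have hsecond : ‖(A u).symm (A u q - A v q)‖ ≤ c * C * ‖u - v‖ :=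
    calc ‖(A u).symm (A u q - A v q)‖ ≤ c * ‖u - v‖ * ‖q‖ := hA u hu v hv q
      _ ≤ c * ‖u - v‖ * C := by gcongr; exact hbound v hv
      _ = c * C * ‖u - v‖ := by ring
  calc ‖(A u).symm (G u - h) - (A v).symm (G v - h)‖
      = ‖(A u).symm (G u - G v) - (A u).symm (A u q - A v q)‖ := by
        rw [symm_apply_sub_symm_apply, sub_sub_sub_cancel_right]
    _ ≤ M * L * ‖u - v‖ + c * C * ‖u - v‖ := (norm_sub_le _ _).trans (add_le_add hfirst hsecond)
    _ = (M * L + c * C) * ‖u - v‖ := by ring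
    _ ≤ (M * L + c * C).toNNReal * ‖u - v‖ := by gcongr; exact Real.le_coe_toNNReal _

theorem stmt9_general
    {Ha Hb : Type*} [NormedAddCommGroup Ha] [InnerProductSpace ℝ Ha]
    [NormedAddCommGroup Hb] [InnerProductSpace ℝ Hb]
    (F : Ha → Hb) (A : Ha → (Ha ≃L[ℝ] Hb))
    (U : Ha) (h : Hb) (R c₀ c₀' c : ℝ)
    (hc₀ : 0 < c₀) (hc₀' : 0 < c₀') (hc : 0 < c)
    (hderiv : ∀ u ∈ Metric.closedBall U R,
      HasFDerivWithinAt F ((A u : Ha →L[ℝ] Hb)) (Metric.closedBall U R) u)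
    (h8 : ∀ u ∈ Metric.closedBall U R, ∀ v : Ha,
      c₀ * ‖v‖ ≤ ‖(A u) v‖ ∧ ‖(A u) v‖ ≤ c₀' * ‖v‖)
    (h10 : ∀ u ∈ Metric.closedBall U R, ∀ v ∈ Metric.closedBall U R, ∀ q : Ha,
      ‖(A u).symm ((A u) q - (A v) q)‖ ≤ c * ‖u - v‖ * ‖q‖)
    (hFh : ∀ v ∈ Metric.closedBall U R, ‖(A v).symm (F v - h)‖ ≤ c) :
    LocallyLipschitzOn (Metric.closedBall U R)
      (fun u : Ha => (A u).symm (F u - h)) := by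
  have hFlip : ∀ u ∈ Metric.closedBall U R, ∀ v ∈ Metric.closedBall U R,
      ‖F u - F v‖ ≤ c₀' * ‖u - v‖ := fun u hu v hv =>
    (convex_closedBall U R).norm_image_sub_le_of_norm_hasFDerivWithin_le hderiv
      (fun x hx => ContinuousLinearMap.opNorm_le_bound _ hc₀'.le fun w => (h8 x hx w).2) hv hu
  have hAinv : ∀ u ∈ Metric.closedBall U R, ∀ w, ‖(A u).symm w‖ ≤ c₀⁻¹ * ‖w‖ := fun u hu =>
    ContinuousLinearEquiv.norm_symm_apply_le_inv_mul hc₀ fun v => (h8 u hu v).1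
  have hLip := lipschitzOnWith_symm_apply_sub (inv_nonneg.2 hc₀.le) hc.le hFlip hAinv h10 hFh
  exact fun _ _ => ⟨_, _, self_mem_nhdsWithin, hLip⟩

/-- Under assumptions (7)–(10) of the paper (scale of Hilbert spaces, modelled
by a norm-nonincreasing continuous embedding `J : Hₐ → Hₐ₊δ`, isomorphism
bounds on `A u = F' u`, and stability bounds), the Newton-type vector field
`u ↦ (F' u)⁻¹ (F u - h)` is locally Lipschitz on the ball `B_a(U, R)`. -/
theorem stmt9
    {Ha Hb : Type*} [NormedAddCommGroup Ha] [InnerProductSpace ℝ Ha]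
    [NormedAddCommGroup Hb] [InnerProductSpace ℝ Hb]
    (J : Ha →L[ℝ] Hb) (hJinj : Function.Injective J)
    (hJ : ∀ x : Ha, ‖J x‖ ≤ ‖x‖)
    (F : Ha → Hb) (A : Ha → (Ha ≃L[ℝ] Hb))
    (U : Ha) (h f : Hb) (R c₀ c₀' c : ℝ)
    (hR : 0 < R) (hc₀ : 0 < c₀) (hc₀' : 0 < c₀') (hc : 0 < c)
    (hFU : F U = f)
    (hFcont : ContinuousOn F (Metric.closedBall U R))
    (hderiv : ∀ u ∈ Metric.closedBall U R,
      HasFDerivWithinAt F ((A u : Ha →L[ℝ] Hb)) (Metric.closedBall U R) u)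
    (h8 : ∀ u ∈ Metric.closedBall U R, ∀ v : Ha,
      c₀ * ‖v‖ ≤ ‖(A u) v‖ ∧ ‖(A u) v‖ ≤ c₀' * ‖v‖)
    (h9 : ∀ v ∈ Metric.closedBall U R, ∀ w ∈ Metric.closedBall U R, ∀ q : Ha,
      ‖(A v).symm ((A w) q)‖ ≤ c * ‖q‖)
    (h10 : ∀ u ∈ Metric.closedBall U R, ∀ v ∈ Metric.closedBall U R, ∀ q : Ha,
      ‖(A u).symm ((A u) q - (A v) q)‖ ≤ c * ‖u - v‖ * ‖q‖)
    (hFh : ∀ v ∈ Metric.closedBall U R, ‖(A v).symm (F v - h)‖ ≤ c) :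
    LocallyLipschitzOn (Metric.closedBall U R)
      (fun u : Ha => (A u).symm (F u - h)) :=
  stmt9_general F A U h R c₀ c₀' c hc₀ hc₀' hc hderiv h8 h10 hFh
end

section
/- Suppose u solves u' = −[F'(u)]⁻¹(F(u) − h) with u(0) = u₀, F is continuously differentiable, and g(t) := ‖F(u(t)) − h‖ is differentiable where nonzero. Then g·g' = −g², and consequently ‖F(u(t)) − h‖ ≤ ‖F(u₀) − h‖·e^{−t} for all t ≥ 0. -/
/-!
Along the continuous Newton flow the chain rule gives `(F ∘ u)' = F'(u) u' = -(F(u) - h)`, so the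
residual `v = F ∘ u - h` solves the linear equation `v' = -v`. Hence `s ↦ eˢ v s` has zero
derivative, i.e. `v t = e⁻ᵗ v 0`, which gives the decay bound; and differentiating `‖v‖²` in two
ways yields `g g' = ⟪v, v'⟫ = -g²`.
-/

theorem hasDerivAt_residual_of_newton_flow {H H' : Type*} [NormedAddCommGroup H]
    [NormedSpace ℝ H] [NormedAddCommGroup H'] [NormedSpace ℝ H']
    {F : H → H'} {A : H ≃L[ℝ] H'} {u : ℝ → H} (h : H') {t : ℝ}
    (hF : HasFDerivAt F (A : H →L[ℝ] H') (u t))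
    (hu : HasDerivAt u (-A.symm (F (u t) - h)) t) :
    HasDerivAt (fun s => F (u s) - h) (-(F (u t) - h)) t := by
  have hcomp := hF.comp_hasDerivAt t hu
  rw [map_neg, ContinuousLinearEquiv.coe_coe, ContinuousLinearEquiv.apply_symm_apply] at hcomp
  exact hcomp.sub_const h

theorem eq_exp_neg_smul_of_hasDerivAt_neg {E : Type*} [NormedAddCommGroup E] [NormedSpace ℝ E]
    {v : ℝ → E} (hv : ∀ t, 0 ≤ t → HasDerivAt v (-v t) t) {t : ℝ} (ht : 0 ≤ t) :
    v t = Real.exp (-t) • v 0 := by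
  have hw : ∀ s, 0 ≤ s → HasDerivAt (fun r => Real.exp r • v r) 0 s := fun s hs => by
    have hd := (Real.hasDerivAt_exp s).smul (hv s hs)
    rwa [smul_neg, neg_add_cancel] at hd
  have hconst := constant_of_has_deriv_right_zero (a := 0) (b := t)
    (fun s hs => (hw s hs.1).continuousAt.continuousWithinAt)
    (fun s hs => (hw s hs.1).hasDerivWithinAt) t ⟨ht, le_rfl⟩
  rw [Real.exp_zero, one_smul] at hconst
  rw [← hconst, smul_smul, ← Real.exp_add, neg_add_cancel, Real.exp_zero, one_smul]

theorem norm_mul_deriv_norm_eq_neg_sq {E : Type*} [NormedAddCommGroup E] [InnerProductSpace ℝ E]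
    {v : ℝ → E} {t g' : ℝ} (hv : HasDerivAt v (-v t) t)
    (hg : HasDerivAt (fun s => ‖v s‖) g' t) :
    ‖v t‖ * g' = -‖v t‖ ^ 2 := by
  have hsq := (hg.pow 2).unique hv.norm_sq
  rw [inner_neg_right, real_inner_self_eq_norm_sq] at hsq
  push_cast at hsq
  linarith

theorem stmt11_general
    {H H' : Type*} [NormedAddCommGroup H] [InnerProductSpace ℝ H]
    [NormedAddCommGroup H'] [InnerProductSpace ℝ H']
    (F : H → H') (A : H → (H ≃L[ℝ] H')) (h : H')
    (u u' : ℝ → H) (u₀ : H) (g' : ℝ → ℝ)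
    (hF : ContDiff ℝ 1 F)
    (hA : ∀ t : ℝ, 0 ≤ t → (A (u t) : H →L[ℝ] H') = fderiv ℝ F (u t))
    (hu0 : u 0 = u₀)
    (hflow : ∀ t : ℝ, 0 ≤ t → HasDerivAt u (u' t) t ∧
      u' t = -((A (u t)).symm (F (u t) - h)))
    (hg' : ∀ t : ℝ, 0 ≤ t → F (u t) - h ≠ 0 →
      HasDerivAt (fun s => ‖F (u s) - h‖) (g' t) t) :
    (∀ t : ℝ, 0 ≤ t → F (u t) - h ≠ 0 →
        ‖F (u t) - h‖ * g' t = -‖F (u t) - h‖ ^ 2) ∧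
    (∀ t : ℝ, 0 ≤ t → ‖F (u t) - h‖ ≤ ‖F u₀ - h‖ * Real.exp (-t)) := by
  have hres : ∀ t, 0 ≤ t → HasDerivAt (fun s => F (u s) - h) (-(F (u t) - h)) t := by
    intro t ht
    obtain ⟨hu, hu'⟩ := hflow t ht
    have hFA : HasFDerivAt F (A (u t) : H →L[ℝ] H') (u t) :=
      hA t ht ▸ (hF.differentiable one_ne_zero (u t)).hasFDerivAt
    exact hasDerivAt_residual_of_newton_flow h hFA (hu' ▸ hu)
  refine ⟨fun t ht hne => norm_mul_deriv_norm_eq_neg_sq (hres t ht) (hg' t ht hne),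
    fun t ht => ?_⟩
  rw [eq_exp_neg_smul_of_hasDerivAt_neg hres ht, norm_smul,
    Real.norm_of_nonneg (Real.exp_pos _).le, hu0, mul_comm]

/-- Along the DSM flow `u' = -(F' u)⁻¹ (F u - h)`, the function
`g t = ‖F (u t) - h‖` satisfies `g g' = -g²` (where differentiable, i.e. where
`g ≠ 0`), and consequently `g t ≤ g 0 · e^{-t}` for all `t ≥ 0`. -/
theorem stmt11
    {H H' : Type*} [NormedAddCommGroup H] [InnerProductSpace ℝ H]
    [NormedAddCommGroup H'] [InnerProductSpace ℝ H'] [CompleteSpace H']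
    (F : H → H') (A : H → (H ≃L[ℝ] H')) (h : H')
    (u u' : ℝ → H) (u₀ : H) (g' : ℝ → ℝ)
    (hF : ContDiff ℝ 1 F)
    (hA : ∀ t : ℝ, 0 ≤ t → (A (u t) : H →L[ℝ] H') = fderiv ℝ F (u t))
    (hu0 : u 0 = u₀)
    (hflow : ∀ t : ℝ, 0 ≤ t → HasDerivAt u (u' t) t ∧
      u' t = -((A (u t)).symm (F (u t) - h)))
    (hg' : ∀ t : ℝ, 0 ≤ t → F (u t) - h ≠ 0 →
      HasDerivAt (fun s => ‖F (u s) - h‖) (g' t) t) :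
    (∀ t : ℝ, 0 ≤ t → F (u t) - h ≠ 0 →
        ‖F (u t) - h‖ * g' t = -‖F (u t) - h‖ ^ 2) ∧
    (∀ t : ℝ, 0 ≤ t → ‖F (u t) - h‖ ≤ ‖F u₀ - h‖ * Real.exp (-t)) :=
  stmt11_general F A h u u' u₀ g' hF hA hu0 hflow hg'
end

section
/- Under the hypotheses of Theorem 1 (scale of Hilbert spaces, F : B_a(U,R) → H_{a+δ} with F(U) = f, isomorphism bounds (8), stability bounds (9)-(10), u₀ ∈ B_a(U,ρ), h ∈ B_{a+δ}(f,ρ), ρ ≤ R/(1 + c₀⁻¹(1+c₀'))), the Cauchy problem u' = −[F'(u)]⁻¹(F(u) − h), u(0) = u₀ has a unique global solution u(t) on [0,∞), the limit V = lim_{t→∞} u(t) exists in H_a, and F(V) = h. -/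
/-
Along the flow `u' = -[F'(u)]⁻¹ (F u - h)` the residual obeys `(F u - h)' = -(F u - h)`, hence
`F (u t) - h = e^{-t} (F u₀ - h)` for as long as `u` stays in `B(U, R)`. By (8) the speed is then
at most `c₀⁻¹ e^{-t} ‖F u₀ - h‖`, so the total path length is at most
`c₀⁻¹ ‖F u₀ - h‖ ≤ c₀⁻¹ (1 + c₀') ρ`, and the smallness of `ρ` keeps `u` strictly inside the
ball: a continuity argument shows that it never leaves. The same bound makes `u t` Cauchy as
`t → ∞`, and its limit `V` satisfies `F V = h` because the residual tends to `0`.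

By (8) and (10) the vector field is Lipschitz and bounded on the ball; precomposed with the
radial retraction onto the ball it becomes globally Lipschitz, which yields a global solution by
Picard–Lindelöf, and uniqueness among solutions staying in the ball.
-/

open Set Metric Filter Topology Real

theorem Continuous.mem_closedBall_of_bootstrap {X : Type*} [PseudoMetricSpace X] {u : ℝ → X}
    (hu : Continuous u) {x : X} {R : ℝ}
    (hstep : ∀ b, 0 ≤ b → (∀ t ∈ Ico 0 b, u t ∈ closedBall x R) → dist (u b) x < R)
    {t : ℝ} (ht : 0 ≤ t) : u t ∈ closedBall x R := by
  by_contra hout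
  set S := {s ∈ Icc 0 t | R ≤ dist (u s) x}
  have hS : IsCompact S :=
    isCompact_Icc.inter_right (isClosed_le continuous_const (hu.dist continuous_const))
  obtain ⟨τ, ⟨⟨hτ0, hτt⟩, hτR⟩, hleast⟩ :=
    hS.exists_isLeast ⟨t, ⟨ht, le_rfl⟩, (not_le.1 hout).le⟩
  refine (hstep τ hτ0 fun s hs => ?_).not_ge hτR
  by_contra hsout
  exact (hleast ⟨⟨hs.1, hs.2.le.trans hτt⟩, (not_le.1 hsout).le⟩).not_gt hs.2

section Flow

variable {E : Type*} [NormedAddCommGroup E] [NormedSpace ℝ E] {R : ℝ}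

theorem min_one_div_smul_of_norm_le {z : E} (hz : ‖z‖ ≤ R) : min 1 (R / ‖z‖) • z = z := by
  rcases (norm_nonneg z).eq_or_lt with h0 | h0
  · simp [norm_eq_zero.1 h0.symm]
  · rw [min_eq_left ((one_le_div h0).2 hz), one_smul]

theorem norm_min_one_div_smul_sub_le (hR : 0 ≤ R) {z w : E} (hwz : ‖w‖ ≤ ‖z‖) :
    ‖min 1 (R / ‖z‖) • z - min 1 (R / ‖w‖) • w‖ ≤ 2 * ‖z - w‖ := by
  rcases le_or_gt ‖z‖ R with hzR | hRz
  · rw [min_one_div_smul_of_norm_le hzR, min_one_div_smul_of_norm_le (hwz.trans hzR)]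
    linarith [norm_nonneg (z - w)]
  have hz0 : 0 < ‖z‖ := hR.trans_lt hRz
  set t := R / ‖z‖
  set σ := min 1 (R / ‖w‖)
  have ht1 : t ≤ 1 := (div_le_one hz0).2 hRz.le
  have hzt : min 1 t = t := min_eq_right ht1
  have hσw : σ * ‖w‖ = min ‖w‖ R := by
    rcases (norm_nonneg w).eq_or_lt with hw0 | hw0
    · rw [← hw0]; simp [hR]
    · rw [min_mul_of_nonneg _ _ hw0.le, one_mul, div_mul_cancel₀ _ hw0.ne']
  have hgap : |t - σ| * ‖w‖ ≤ ‖z‖ - ‖w‖ := by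
    have htw : t * ‖w‖ ≤ σ * ‖w‖ := by
      rw [hσw, le_min_iff]
      exact ⟨mul_le_of_le_one_left (norm_nonneg w) ht1,
        by rw [div_mul_eq_mul_div, div_le_iff₀ hz0]; gcongr⟩
    rw [← abs_norm w, ← abs_mul, abs_norm, sub_mul, abs_of_nonpos (by linarith), neg_sub, hσw]
    calc min ‖w‖ R - t * ‖w‖ ≤ R - t * ‖w‖ := by gcongr; exact min_le_right _ _
      _ = t * (‖z‖ - ‖w‖) := by simp only [t]; field_simp
      _ ≤ ‖z‖ - ‖w‖ := mul_le_of_le_one_left (by linarith) ht1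
  calc ‖min 1 t • z - σ • w‖ = ‖t • (z - w) + (t - σ) • w‖ := by
        rw [hzt, smul_sub, sub_smul]; abel_nf
    _ ≤ t * ‖z - w‖ + |t - σ| * ‖w‖ := by
        refine (norm_add_le _ _).trans ?_
        rw [norm_smul, norm_smul, Real.norm_of_nonneg (by positivity), Real.norm_eq_abs]
    _ ≤ ‖z - w‖ + (‖z‖ - ‖w‖) := by
        gcongr
        exact mul_le_of_le_one_left (norm_nonneg _) ht1
    _ ≤ 2 * ‖z - w‖ := by linarith [norm_sub_norm_le z w]

noncomputable def ballRetraction (x : E) (R : ℝ) (y : E) : E :=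
  x + min 1 (R / ‖y - x‖) • (y - x)

theorem ballRetraction_of_mem {x y : E} (hy : y ∈ closedBall x R) : ballRetraction x R y = y := by
  rw [mem_closedBall, dist_eq_norm] at hy
  rw [ballRetraction, min_one_div_smul_of_norm_le hy, add_sub_cancel]

theorem ballRetraction_mem (hR : 0 ≤ R) (x y : E) : ballRetraction x R y ∈ closedBall x R := by
  rw [mem_closedBall, dist_eq_norm, ballRetraction, add_sub_cancel_left, norm_smul,
    Real.norm_of_nonneg (le_min zero_le_one (by positivity))]
  rcases (norm_nonneg (y - x)).eq_or_lt with h0 | h0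
  · rw [← h0, mul_zero]; exact hR
  · exact (mul_le_mul_of_nonneg_right (min_le_right _ _) h0.le).trans (div_mul_cancel₀ _ h0.ne').le

theorem lipschitzWith_ballRetraction (hR : 0 ≤ R) (x : E) :
    LipschitzWith 2 (ballRetraction x R) := by
  refine LipschitzWith.of_dist_le_mul fun y y' => ?_
  have key : ∀ z w : E, ‖min 1 (R / ‖z‖) • z - min 1 (R / ‖w‖) • w‖ ≤ 2 * ‖z - w‖ := by
    intro z w
    rcases le_total ‖w‖ ‖z‖ with h | h
    · exact norm_min_one_div_smul_sub_le hR h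
    · rw [norm_sub_rev, norm_sub_rev z]; exact norm_min_one_div_smul_sub_le hR h
  simpa [dist_eq_norm, ballRetraction] using key (y - x) (y' - x)

theorem LipschitzWith.exists_forall_hasDerivAt_of_norm_le [CompleteSpace E] {G : E → E}
    {K : NNReal} (hG : LipschitzWith K G) {C : NNReal} (hC : ∀ x, ‖G x‖ ≤ C) (x₀ : E) :
    ∃ u : ℝ → E, u 0 = x₀ ∧ ∀ t, HasDerivAt u (G (u t)) t := by
  -- Picard–Lindelöf on every window `[-(n+1), n+1]`, then glue by uniqueness.
  have hPL (n : ℕ) : IsPicardLindelof (fun _ => G) (tmin := -(n + 1 : ℝ)) (tmax := n + 1)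
      ⟨0, neg_nonpos.2 (by positivity), by positivity⟩ x₀ (C * (n + 1)) 0 C K :=
    .of_time_independent (fun x _ => hC x) hG.lipschitzOnWith (by simp)
  choose sol hsol0 hsol using fun n => (hPL n).exists_eq_forall_mem_Icc_hasDerivWithinAt₀
  have hsol' (n : ℕ) {t : ℝ} (ht : t ∈ Ioo (-(n + 1 : ℝ)) (n + 1)) :
      HasDerivAt (sol n) (G (sol n t)) t :=
    (hsol n t (Ioo_subset_Icc_self ht)).hasDerivAt (Icc_mem_nhds ht.1 ht.2)
  have hagree {m n : ℕ} (hmn : m ≤ n) : EqOn (sol m) (sol n) (Ioo (-(m + 1 : ℝ)) (m + 1)) := by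
    have hsub : Ioo (-(m + 1 : ℝ)) (m + 1) ⊆ Ioo (-(n + 1 : ℝ)) (n + 1) := by
      have : (m : ℝ) ≤ n := by exact_mod_cast hmn
      exact Ioo_subset_Ioo (by linarith) (by linarith)
    exact ODE_solution_unique_of_mem_Ioo (v := fun _ => G) (s := fun _ => univ)
      (fun _ _ => hG.lipschitzOnWith) (t₀ := 0) ⟨neg_lt_zero.2 (by positivity), by positivity⟩
      (fun t ht => ⟨hsol' m ht, trivial⟩) (fun t ht => ⟨hsol' n (hsub ht), trivial⟩)
      (by rw [hsol0, hsol0])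
  have hwindow (t : ℝ) : t ∈ Ioo (-(⌈|t|⌉₊ + 1 : ℝ)) (⌈|t|⌉₊ + 1) := by
    have := abs_le.1 (Nat.le_ceil |t|)
    constructor <;> linarith
  set u : ℝ → E := fun t => sol ⌈|t|⌉₊ t
  have hu (n : ℕ) : EqOn u (sol n) (Ioo (-(n + 1 : ℝ)) (n + 1)) := fun t ht => by
    rcases le_total ⌈|t|⌉₊ n with h | h
    · exact hagree h (hwindow t)
    · exact (hagree h ht).symm
  refine ⟨u, by simp [u, hsol0], fun t => ?_⟩
  have hnhds := Ioo_mem_nhds (hwindow t).1 (hwindow t).2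
  rw [hu _ (hwindow t)]
  exact (hsol' _ (hwindow t)).congr_of_eventuallyEq (Filter.eventuallyEq_of_mem hnhds (hu _))

theorem exists_forall_hasDerivAt_of_lipschitzOnWith_closedBall [CompleteSpace E] {G : E → E}
    {x : E} (hR : 0 ≤ R) {K : NNReal} (hG : LipschitzOnWith K G (closedBall x R)) {C : ℝ}
    (hC : ∀ y ∈ closedBall x R, ‖G y‖ ≤ C) (x₀ : E) :
    ∃ u : ℝ → E, u 0 = x₀ ∧ Continuous u ∧
      ∀ t, u t ∈ closedBall x R → HasDerivAt u (G (u t)) t := by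
  have hGP : LipschitzWith (K * 2) (G ∘ ballRetraction x R) := lipschitzOnWith_univ.1 <|
    hG.comp (lipschitzWith_ballRetraction hR x).lipschitzOnWith fun y _ => ballRetraction_mem hR x y
  obtain ⟨u, hu0, hu⟩ := hGP.exists_forall_hasDerivAt_of_norm_le (C := C.toNNReal)
    (fun y => (hC _ (ballRetraction_mem hR x y)).trans (le_coe_toNNReal C)) x₀
  refine ⟨u, hu0, continuous_iff_continuousAt.2 fun t => (hu t).continuousAt, fun t ht => ?_⟩
  simpa only [Function.comp_apply, ballRetraction_of_mem ht] using hu t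

theorem eqOn_Ici_of_hasDerivAt_of_lipschitzOnWith {v : E → E} {s : Set E} {K : NNReal}
    (hv : LipschitzOnWith K v s) {f g : ℝ → E} {a : ℝ}
    (hf : ∀ t, a ≤ t → HasDerivAt f (v (f t)) t ∧ f t ∈ s)
    (hg : ∀ t, a ≤ t → HasDerivAt g (v (g t)) t ∧ g t ∈ s) (ha : f a = g a) :
    EqOn f g (Ici a) := fun _ ht =>
  ODE_solution_unique_of_mem_Icc_right (v := fun _ => v) (s := fun _ => s) (fun _ _ => hv)
    (HasDerivAt.continuousOn fun r hr => (hf r hr.1).1)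
    (fun r hr => (hf r hr.1).1.hasDerivWithinAt) (fun r hr => (hf r hr.1).2)
    (HasDerivAt.continuousOn fun r hr => (hg r hr.1).1)
    (fun r hr => (hg r hr.1).1.hasDerivWithinAt) (fun r hr => (hg r hr.1).2) ha
    ⟨ht, le_rfl⟩

end Flow

section NewtonField

variable {E F : Type*} [NormedAddCommGroup E] [NormedSpace ℝ E] [NormedAddCommGroup F]
  [NormedSpace ℝ F] {Φ : E → F} {A : E → E ≃L[ℝ] F} {h : F} {s : Set E} {a : ℝ}

theorem Convex.lipschitzOnWith_of_norm_fderiv_apply_le (hs : Convex ℝ s) {f' : E → E →L[ℝ] F}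
    (hf : ∀ x ∈ s, HasFDerivWithinAt Φ (f' x) s x) {C : ℝ} (hC : 0 ≤ C)
    (hbound : ∀ x ∈ s, ∀ v, ‖f' x v‖ ≤ C * ‖v‖) : LipschitzOnWith C.toNNReal Φ s :=
  hs.lipschitzOnWith_of_nnnorm_hasFDerivWithin_le hf fun x hx => by
    rw [← NNReal.coe_le_coe, coe_nnnorm, coe_toNNReal _ hC]
    exact ContinuousLinearMap.opNorm_le_bound _ hC (hbound x hx)

theorem ContinuousLinearEquiv.norm_symm_apply_le (T : E ≃L[ℝ] F) {c₀ : ℝ} (hc₀ : 0 < c₀)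
    (hT : ∀ v, c₀ * ‖v‖ ≤ ‖T v‖) (y : F) : ‖T.symm y‖ ≤ c₀⁻¹ * ‖y‖ := by
  rw [inv_mul_eq_div, le_div_iff₀' hc₀]
  simpa using hT (T.symm y)

noncomputable def newtonField (Φ : E → F) (A : E → E ≃L[ℝ] F) (h : F) (x : E) : E :=
  -(A x).symm (Φ x - h)

theorem lipschitzOnWith_newtonField {L : NNReal} {M c : ℝ} (ha : 0 ≤ a) (hc : 0 ≤ c)
    (hinv : ∀ x ∈ s, ∀ y, ‖(A x).symm y‖ ≤ a * ‖y‖) (hΦ : LipschitzOnWith L Φ s)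
    (hM : ∀ x ∈ s, ‖Φ x - h‖ ≤ M)
    (hA : ∀ x ∈ s, ∀ y ∈ s, ∀ q, ‖(A x).symm (A x q - A y q)‖ ≤ c * ‖x - y‖ * ‖q‖) :
    LipschitzOnWith (a * L + c * (a * M)).toNNReal (newtonField Φ A h) s := by
  refine LipschitzOnWith.of_dist_le_mul fun x hx y hy => ?_
  set q := (A y).symm (Φ x - h)
  have hq : ‖q‖ ≤ a * M := (hinv y hy _).trans (by gcongr; exact hM x hx)
  have hsplit : newtonField Φ A h x - newtonField Φ A h y =
      (A y).symm (Φ y - Φ x) + (A x).symm (A x q - A y q) := by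
    simp only [newtonField, q, map_sub, ContinuousLinearEquiv.symm_apply_apply,
      ContinuousLinearEquiv.apply_symm_apply]
    abel
  rw [dist_eq_norm, dist_eq_norm, hsplit]
  calc _ ≤ a * (L * ‖x - y‖) + c * ‖x - y‖ * (a * M) := by
        refine (norm_add_le _ _).trans (add_le_add ?_ ?_)
        · exact (hinv y hy _).trans (by gcongr; rw [norm_sub_rev]; exact hΦ.norm_sub_le hx hy)
        · exact (hA x hx y hy q).trans (by gcongr)
    _ = (a * L + c * (a * M)) * ‖x - y‖ := by ring
    _ ≤ _ := by gcongr; exact le_coe_toNNReal _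

theorem residual_eq_exp_neg_smul (hΦ : ∀ x ∈ s, HasFDerivWithinAt Φ (A x : E →L[ℝ] F) s x)
    {u : ℝ → E} {b : ℝ} (hb : 0 ≤ b)
    (hu : ∀ t ∈ Icc 0 b, HasDerivAt u (newtonField Φ A h (u t)) t)
    (hus : ∀ t ∈ Icc 0 b, u t ∈ s) :
    Φ (u b) - h = exp (-b) • (Φ (u 0) - h) := by
  have hres (t) (ht : t ∈ Icc 0 b) :
      HasDerivWithinAt (fun t => Φ (u t) - h) (-(Φ (u t) - h)) (Icc 0 b) t := by
    have := ((hΦ _ (hus t ht)).comp_hasDerivWithinAt t (hu t ht).hasDerivWithinAt hus).sub_const h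
    simpa [newtonField] using this
  have hw (t) (ht : t ∈ Icc 0 b) :
      HasDerivWithinAt (fun t => exp t • (Φ (u t) - h)) 0 (Icc 0 b) t :=
    ((hasDerivAt_exp t).hasDerivWithinAt.smul (hres t ht)).congr_deriv
      (by rw [smul_neg, neg_add_cancel])
  have hconst := constant_of_has_deriv_right_zero (fun t ht => (hw t ht).continuousWithinAt)
    (fun t ht => (hw t (Ico_subset_Icc_self ht)).mono_of_mem_nhdsWithin
      (Icc_mem_nhdsGE_of_mem ht)) b ⟨hb, le_rfl⟩
  rw [exp_zero, one_smul] at hconst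
  rw [← hconst, smul_smul, ← exp_add, neg_add_cancel, exp_zero, one_smul]

theorem norm_sub_le_of_newtonField (hΦ : ∀ x ∈ s, HasFDerivWithinAt Φ (A x : E →L[ℝ] F) s x)
    (hinv : ∀ x ∈ s, ∀ y, ‖(A x).symm y‖ ≤ a * ‖y‖) {u : ℝ → E} {σ b : ℝ} (hσ : 0 ≤ σ)
    (hσb : σ ≤ b) (hcont : ContinuousOn u (Icc σ b))
    (hu : ∀ t ∈ Ico 0 b, HasDerivAt u (newtonField Φ A h (u t)) t)
    (hus : ∀ t ∈ Ico 0 b, u t ∈ s) :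
    ‖u b - u σ‖ ≤ a * ‖Φ (u 0) - h‖ * (exp (-σ) - exp (-b)) := by
  have hspeed (t) (ht : t ∈ Ico σ b) :
      ‖newtonField Φ A h (u t)‖ ≤ a * ‖Φ (u 0) - h‖ * exp (-t) := by
    have hsub : Icc 0 t ⊆ Ico 0 b := Icc_subset_Ico_right ht.2
    rw [newtonField, norm_neg]
    refine (hinv _ (hus t (hsub ⟨hσ.trans ht.1, le_rfl⟩)) _).trans (le_of_eq ?_)
    rw [residual_eq_exp_neg_smul hΦ (hσ.trans ht.1) (fun r hr => hu r (hsub hr))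
      (fun r hr => hus r (hsub hr)), norm_smul, norm_of_nonneg (exp_pos _).le]
    ring
  have hbound (t : ℝ) : HasDerivAt (fun t => a * ‖Φ (u 0) - h‖ * (exp (-σ) - exp (-t)))
      (a * ‖Φ (u 0) - h‖ * exp (-t)) t := by
    simpa using ((hasDerivAt_neg t).exp.const_sub (exp (-σ))).const_mul (a * ‖Φ (u 0) - h‖)
  exact image_norm_le_of_norm_deriv_right_le_deriv_boundary (hcont.sub continuousOn_const)
    (fun t ht => ((hu t ⟨hσ.trans ht.1, ht.2⟩).sub_const (u σ)).hasDerivWithinAt)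
    (by simp) hbound hspeed ⟨hσb, le_rfl⟩

theorem exists_tendsto_of_newtonField [CompleteSpace E] (hs : IsClosed s)
    (hΦ : ∀ x ∈ s, HasFDerivWithinAt Φ (A x : E →L[ℝ] F) s x)
    (hinv : ∀ x ∈ s, ∀ y, ‖(A x).symm y‖ ≤ a * ‖y‖) (ha : 0 ≤ a) {u : ℝ → E}
    (hu : ∀ t, 0 ≤ t → HasDerivAt u (newtonField Φ A h (u t)) t)
    (hus : ∀ t, 0 ≤ t → u t ∈ s) :
    ∃ V, Tendsto u atTop (𝓝 V) ∧ Φ V = h := by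
  set C := a * ‖Φ (u 0) - h‖
  have hexp : Tendsto (fun t => exp (-t)) atTop (𝓝 0) :=
    tendsto_exp_atBot.comp tendsto_neg_atTop_atBot
  have hdist (σ t) (hσ : 0 ≤ σ) (hσt : σ ≤ t) : dist (u t) (u σ) ≤ C * exp (-σ) := by
    rw [dist_eq_norm]
    refine (norm_sub_le_of_newtonField hΦ hinv hσ hσt
      (HasDerivAt.continuousOn fun r hr => hu r (hσ.trans hr.1))
      (fun r hr => hu r hr.1) (fun r hr => hus r hr.1)).trans ?_
    have : 0 ≤ C := by positivity
    nlinarith [exp_pos (-t)]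
  have hcauchy : CauchySeq u := by
    refine Metric.cauchySeq_iff'.2 fun ε hε => ?_
    obtain ⟨N, hN0, hN⟩ := ((eventually_ge_atTop 0).and
      ((by simpa using hexp.const_mul C : Tendsto (fun t => C * exp (-t)) atTop (𝓝 0)).eventually
        (gt_mem_nhds hε))).exists
    exact ⟨N, fun t ht => (hdist N t hN0 ht).trans_lt hN⟩
  obtain ⟨V, hV⟩ := cauchySeq_tendsto_of_complete hcauchy
  have hus' : ∀ᶠ t in atTop, u t ∈ s := (eventually_ge_atTop 0).mono hus
  have hVs : V ∈ s := hs.mem_of_tendsto hV hus'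
  have hΦV : Tendsto (fun t => Φ (u t)) atTop (𝓝 (Φ V)) :=
    (hΦ V hVs).continuousWithinAt.tendsto.comp (tendsto_nhdsWithin_iff.2 ⟨hV, hus'⟩)
  have hΦh : Tendsto (fun t => Φ (u t)) atTop (𝓝 h) := by
    have : Tendsto (fun t => exp (-t) • (Φ (u 0) - h) + h) atTop (𝓝 h) := by
      simpa using (hexp.smul_const (Φ (u 0) - h)).add_const h
    refine this.congr' ((eventually_ge_atTop 0).mono fun t ht => ?_)
    rw [← residual_eq_exp_neg_smul hΦ ht (fun r hr => hu r hr.1) (fun r hr => hus r hr.1),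
      sub_add_cancel]
  exact ⟨V, hV, tendsto_nhds_unique hΦV hΦh⟩

theorem norm_newtonField_le {M : ℝ} (ha : 0 ≤ a) (hinv : ∀ x ∈ s, ∀ y, ‖(A x).symm y‖ ≤ a * ‖y‖)
    (hM : ∀ x ∈ s, ‖Φ x - h‖ ≤ M) {x : E} (hx : x ∈ s) : ‖newtonField Φ A h x‖ ≤ a * M := by
  rw [newtonField, norm_neg]
  exact (hinv x hx _).trans (by gcongr; exact hM x hx)

theorem mem_closedBall_of_newtonField {x : E} {R : ℝ}
    (hΦ : ∀ y ∈ closedBall x R, HasFDerivWithinAt Φ (A y : E →L[ℝ] F) (closedBall x R) y)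
    (hinv : ∀ y ∈ closedBall x R, ∀ z, ‖(A y).symm z‖ ≤ a * ‖z‖) {u : ℝ → E}
    (hcont : Continuous u)
    (hu : ∀ t, u t ∈ closedBall x R → HasDerivAt u (newtonField Φ A h (u t)) t)
    (h₀ : ‖u 0 - x‖ < R) (hsmall : ‖u 0 - x‖ + a * ‖Φ (u 0) - h‖ ≤ R) {t : ℝ} (ht : 0 ≤ t) :
    u t ∈ closedBall x R := by
  refine hcont.mem_closedBall_of_bootstrap (fun b hb hub => ?_) ht
  have hinc := norm_sub_le_of_newtonField hΦ hinv le_rfl hb hcont.continuousOn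
    (fun t ht => hu t (hub t ht)) hub
  rw [neg_zero, exp_zero] at hinc
  have he : exp (-b) ≤ 1 := exp_le_one_iff.2 (neg_nonpos.2 hb)
  calc dist (u b) x ≤ ‖u b - u 0‖ + ‖u 0 - x‖ := by
        rw [dist_eq_norm]; exact norm_sub_le_norm_sub_add_norm_sub _ _ _
    _ ≤ a * ‖Φ (u 0) - h‖ * (1 - exp (-b)) + ‖u 0 - x‖ := by gcongr
    _ < R := by nlinarith [mul_pos (sub_pos.2 h₀) (exp_pos (-b))]

end NewtonField

theorem stmt19_general
    {Ha Hb : Type*} [NormedAddCommGroup Ha] [InnerProductSpace ℝ Ha]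
    [CompleteSpace Ha] [NormedAddCommGroup Hb] [InnerProductSpace ℝ Hb]
    (F : Ha → Hb) (A : Ha → (Ha ≃L[ℝ] Hb))
    (U u₀ : Ha) (f h : Hb) (R ρ c₀ c₀' c : ℝ)
    (hR : 0 < R) (hc₀ : 0 < c₀) (hc₀' : 0 < c₀') (hc : 0 < c)
    (hFU : F U = f)
    (hderiv : ∀ u ∈ Metric.closedBall U R,
      HasFDerivWithinAt F ((A u : Ha →L[ℝ] Hb)) (Metric.closedBall U R) u)
    (h8 : ∀ u ∈ Metric.closedBall U R, ∀ v : Ha,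
      c₀ * ‖v‖ ≤ ‖(A u) v‖ ∧ ‖(A u) v‖ ≤ c₀' * ‖v‖)
    (h10 : ∀ u ∈ Metric.closedBall U R, ∀ v ∈ Metric.closedBall U R, ∀ q : Ha,
      ‖(A u).symm ((A u) q - (A v) q)‖ ≤ c * ‖u - v‖ * ‖q‖)
    (hu₀ : ‖u₀ - U‖ ≤ ρ) (hh : ‖h - f‖ ≤ ρ)
    (hρ : ρ ≤ R / (1 + c₀⁻¹ * (1 + c₀'))) :
    ∃ u u' : ℝ → Ha,
      u 0 = u₀ ∧
      (∀ t : ℝ, 0 ≤ t → u t ∈ Metric.closedBall U R) ∧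
      (∀ t : ℝ, 0 ≤ t → HasDerivAt u (u' t) t ∧
        u' t = -((A (u t)).symm (F (u t) - h))) ∧
      (∀ v v' : ℝ → Ha,
        v 0 = u₀ →
        (∀ t : ℝ, 0 ≤ t → v t ∈ Metric.closedBall U R) →
        (∀ t : ℝ, 0 ≤ t → HasDerivAt v (v' t) t ∧
          v' t = -((A (v t)).symm (F (v t) - h))) →
        ∀ t : ℝ, 0 ≤ t → v t = u t) ∧
      ∃ V : Ha, Filter.Tendsto u Filter.atTop (nhds V) ∧ F V = h := by
  set B := closedBall U R
  have hc₀inv : 0 ≤ c₀⁻¹ := inv_nonneg.2 hc₀.le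
  have hinv (x) (hx : x ∈ B) : ∀ y, ‖(A x).symm y‖ ≤ c₀⁻¹ * ‖y‖ :=
    (A x).norm_symm_apply_le hc₀ fun v => (h8 x hx v).1
  have hFlip : LipschitzOnWith c₀'.toNNReal F B :=
    (convex_closedBall U R).lipschitzOnWith_of_norm_fderiv_apply_le hderiv hc₀'.le
      fun x hx v => (h8 x hx v).2
  have hres (x) (hx : x ∈ B) : ‖F x - h‖ ≤ c₀' * ‖x - U‖ + ρ := by
    have hFx : ‖F x - F U‖ ≤ c₀' * ‖x - U‖ := by
      simpa [coe_toNNReal _ hc₀'.le] using hFlip.norm_sub_le hx (mem_closedBall_self hR.le)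
    calc ‖F x - h‖ ≤ ‖F x - F U‖ + ‖f - h‖ := hFU ▸ norm_sub_le_norm_sub_add_norm_sub _ _ _
      _ ≤ _ := add_le_add hFx (by rwa [norm_sub_rev])
  have hM (x) (hx : x ∈ B) : ‖F x - h‖ ≤ c₀' * R + ρ :=
    (hres x hx).trans (by gcongr; exact mem_closedBall_iff_norm.1 hx)
  have hρR' : ρ * (1 + c₀⁻¹ * (1 + c₀')) ≤ R := (le_div_iff₀ (by positivity)).1 hρ
  have hρR : ρ < R := by
    rcases ((norm_nonneg _).trans hu₀).eq_or_lt with h0 | h0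
    · rwa [← h0]
    · nlinarith [mul_pos h0 (by positivity : 0 < c₀⁻¹ * (1 + c₀'))]
  have hsmall : ‖u₀ - U‖ + c₀⁻¹ * ‖F u₀ - h‖ ≤ R := by
    have hFu₀ := hres u₀ (mem_closedBall_iff_norm.2 (hu₀.trans hρR.le))
    calc ‖u₀ - U‖ + c₀⁻¹ * ‖F u₀ - h‖ ≤ ρ + c₀⁻¹ * (c₀' * ρ + ρ) := by
          gcongr; exact hFu₀.trans (by gcongr)
      _ = ρ * (1 + c₀⁻¹ * (1 + c₀')) := by ring
      _ ≤ R := hρR'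
  have hK := lipschitzOnWith_newtonField hc₀inv hc.le hinv hFlip hM h10
  obtain ⟨u, hu0, hcont, hflow⟩ := exists_forall_hasDerivAt_of_lipschitzOnWith_closedBall hR.le hK
    (fun x hx => norm_newtonField_le hc₀inv hinv hM hx) u₀
  have h₀ : ‖u₀ - U‖ < R := hu₀.trans_lt hρR
  have hball (t) (ht : 0 ≤ t) : u t ∈ B :=
    mem_closedBall_of_newtonField hderiv hinv hcont hflow (by rwa [hu0]) (by rwa [hu0]) ht
  refine ⟨u, fun t => newtonField F A h (u t), hu0, hball,
    fun t ht => ⟨hflow t (hball t ht), rfl⟩, ?_, ?_⟩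
  · intro v v' hv0 hvB hv t ht
    refine eqOn_Ici_of_hasDerivAt_of_lipschitzOnWith hK (fun t ht => ?_)
      (fun t ht => ⟨hflow t (hball t ht), hball t ht⟩) (hv0.trans hu0.symm) ht
    obtain ⟨hvd, hv'⟩ := hv t ht
    exact ⟨by rwa [hv'] at hvd, hvB t ht⟩
  · exact exists_tendsto_of_newtonField isClosed_closedBall hderiv hinv hc₀inv
      (fun t ht => hflow t (hball t ht)) hball

/-- Theorem 1 of the paper (DSM hard implicit function theorem): under the
scale-of-Hilbert-spaces assumptions (7)-(10) and the smallness condition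
`ρ ≤ R / (1 + c₀⁻¹(1 + c₀'))`, the Cauchy problem
`u' = -(F' u)⁻¹ (F u - h)`, `u 0 = u₀` has a unique global solution staying in
`B_a(U, R)`, the limit `V = lim_{t→∞} u t` exists in `H_a`, and `F V = h`. -/
theorem stmt19
    {Ha Hb : Type*} [NormedAddCommGroup Ha] [InnerProductSpace ℝ Ha]
    [CompleteSpace Ha] [NormedAddCommGroup Hb] [InnerProductSpace ℝ Hb]
    (J : Ha →L[ℝ] Hb) (hJinj : Function.Injective J)
    (hJ : ∀ x : Ha, ‖J x‖ ≤ ‖x‖)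
    (F : Ha → Hb) (A : Ha → (Ha ≃L[ℝ] Hb))
    (U u₀ : Ha) (f h : Hb) (R ρ c₀ c₀' c : ℝ)
    (hR : 0 < R) (hc₀ : 0 < c₀) (hc₀' : 0 < c₀') (hc : 0 < c) (hρpos : 0 < ρ)
    (hFU : F U = f)
    (hFcont : ContinuousOn F (Metric.closedBall U R))
    (hderiv : ∀ u ∈ Metric.closedBall U R,
      HasFDerivWithinAt F ((A u : Ha →L[ℝ] Hb)) (Metric.closedBall U R) u)
    (h8 : ∀ u ∈ Metric.closedBall U R, ∀ v : Ha,
      c₀ * ‖v‖ ≤ ‖(A u) v‖ ∧ ‖(A u) v‖ ≤ c₀' * ‖v‖)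
    (h9 : ∀ v ∈ Metric.closedBall U R, ∀ w ∈ Metric.closedBall U R, ∀ q : Ha,
      ‖(A v).symm ((A w) q)‖ ≤ c * ‖q‖)
    (h10 : ∀ u ∈ Metric.closedBall U R, ∀ v ∈ Metric.closedBall U R, ∀ q : Ha,
      ‖(A u).symm ((A u) q - (A v) q)‖ ≤ c * ‖u - v‖ * ‖q‖)
    (hu₀ : ‖u₀ - U‖ ≤ ρ) (hh : ‖h - f‖ ≤ ρ)
    (hρ : ρ ≤ R / (1 + c₀⁻¹ * (1 + c₀'))) :
    ∃ u u' : ℝ → Ha,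
      u 0 = u₀ ∧
      (∀ t : ℝ, 0 ≤ t → u t ∈ Metric.closedBall U R) ∧
      (∀ t : ℝ, 0 ≤ t → HasDerivAt u (u' t) t ∧
        u' t = -((A (u t)).symm (F (u t) - h))) ∧
      (∀ v v' : ℝ → Ha,
        v 0 = u₀ →
        (∀ t : ℝ, 0 ≤ t → v t ∈ Metric.closedBall U R) →
        (∀ t : ℝ, 0 ≤ t → HasDerivAt v (v' t) t ∧
          v' t = -((A (v t)).symm (F (v t) - h))) →
        ∀ t : ℝ, 0 ≤ t → v t = u t) ∧
      ∃ V : Ha, Filter.Tendsto u Filter.atTop (nhds V) ∧ F V = h :=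
  stmt19_general F A U u₀ f h R ρ c₀ c₀' c hR hc₀ hc₀' hc hFU hderiv h8 h10 hu₀ hh hρ
end
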